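/- Let d ≥ 3, Y' a harmonic homogeneous polynomial of degree n' in x' = (x₁,…,x_{d−1}), λ = n' + (d−2)/2 > 1, and Y(x) = Y'(x') F_m^λ(x) with F_m^λ(x) = ‖x‖^m C_m^λ(x_d/‖x‖). Then for 1 ≤ i ≤ d−1, ∂ᵢ Y(x) = −2λ · proj_{n'+1,S}^{d−1}(x_i Y')(x') · F_{m−2}^{λ+1}(x) + ((m+2λ−1)(m+2λ−2)/((2λ−1)(2λ−2))) · ∂ᵢY'(x') · F_m^{λ−1}(x), where proj_{n'+1,S}^{d−1}(x_i Y')(x') = x_i Y'(x') − (‖x'‖²/(2(n'+(d−3)/2))) ∂ᵢ Y'(x'). -/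

import Mathlib

open scoped BigOperators
open MeasureTheory

noncomputable def poch (a : ℝ) (n : ℕ) : ℝ := ∏ i ∈ Finset.range n, (a + i)

noncomputable def gegenbauer (n : ℕ) (lam t : ℝ) : ℝ :=
  ∑ k ∈ Finset.range (n / 2 + 1),
    (-1 : ℝ) ^ k * poch lam (n - k) /
      ((Nat.factorial k : ℝ) * (Nat.factorial (n - 2 * k) : ℝ)) * (2 * t) ^ (n - 2 * k)

noncomputable def jacobi (j : ℕ) (a b t : ℝ) : ℝ :=
  poch (a + 1) j / (Nat.factorial j : ℝ) *
    ∑ k ∈ Finset.range (j + 1),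
      poch (-(j : ℝ)) k * poch ((j : ℝ) + a + b + 1) k /
        (poch (a + 1) k * (Nat.factorial k : ℝ)) * ((1 - t) / 2) ^ k

noncomputable def pd {d : ℕ} (i : Fin d) (f : EuclideanSpace ℝ (Fin d) → ℝ)
    (x : EuclideanSpace ℝ (Fin d)) : ℝ :=
  fderiv ℝ f x (EuclideanSpace.single i 1)

noncomputable def lap {d : ℕ} (f : EuclideanSpace ℝ (Fin d) → ℝ)
    (x : EuclideanSpace ℝ (Fin d)) : ℝ :=
  ∑ i, pd i (pd i f) x

noncomputable def Dang {d : ℕ} (i j : Fin d) (f : EuclideanSpace ℝ (Fin d) → ℝ)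
    (x : EuclideanSpace ℝ (Fin d)) : ℝ :=
  x i * pd j f x - x j * pd i f x

noncomputable def lapS {d : ℕ} (f : EuclideanSpace ℝ (Fin d) → ℝ)
    (x : EuclideanSpace ℝ (Fin d)) : ℝ :=
  ∑ p ∈ Finset.univ.filter (fun p : Fin d × Fin d => p.1 < p.2),
    Dang p.1 p.2 (Dang p.1 p.2 f) x

/-- `F_m^λ(x) = ‖x‖^m C_m^λ(x_d/‖x‖)` (which extends to a polynomial in `x`);
by convention `F_m^λ = 0` for `m < 0`. -/
noncomputable def FgZ (d : ℕ) (m : ℤ) (lam : ℝ) (x : EuclideanSpace ℝ (Fin (d + 1))) : ℝ :=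
  if 0 ≤ m then ‖x‖ ^ m.toNat * gegenbauer m.toNat lam (x (Fin.last d) / ‖x‖) else 0

/-- restriction of `x ∈ ℝ^{d+1}` to its first `d` coordinates -/
noncomputable def restr (d : ℕ) (x : EuclideanSpace ℝ (Fin (d + 1))) :
    EuclideanSpace ℝ (Fin d) :=
  WithLp.toLp 2 (fun i : Fin d => x i.castSucc)



lemma poch_zero (a : ℝ) : poch a 0 = 1 := Finset.prod_range_zero _

lemma poch_succ (a : ℝ) (n : ℕ) : poch a (n+1) = poch a n * (a + n) := Finset.prod_range_succ _ _

lemma poch_succ_left (a : ℝ) (n : ℕ) : poch a (n+1) = a * poch (a+1) n := by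
  rw [poch, Finset.prod_range_succ']
  rw [mul_comm]
  congr 1
  · push_cast; ring_nf
  · apply Finset.prod_congr rfl
    intro i _
    push_cast; ring

noncomputable def cc (m : ℕ) (lam : ℝ) (k : ℕ) : ℝ :=
  if 2*k ≤ m then (-1:ℝ)^k * poch lam (m-k) * 2^(m-2*k) /
    ((Nat.factorial k : ℝ) * (Nat.factorial (m-2*k) : ℝ)) else 0

noncomputable def Fp (m : ℕ) (lam t s : ℝ) : ℝ :=
  ∑ k ∈ Finset.range (m+1), cc m lam k * t^(m-2*k) * s^k

noncomputable def Fq (m : ℕ) (lam t s : ℝ) : ℝ :=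
  ∑ k ∈ Finset.range (m+1), cc m lam k * (k:ℝ) * t^(m-2*k) * s^(k-1)

lemma cc_zero {m k : ℕ} (lam : ℝ) (h : ¬ (2*k ≤ m)) : cc m lam k = 0 := if_neg h

lemma cc_pos {m k : ℕ} (lam : ℝ) (h : 2*k ≤ m) :
    cc m lam k = (-1:ℝ)^k * poch lam (m-k) * 2^(m-2*k) /
    ((Nat.factorial k : ℝ) * (Nat.factorial (m-2*k) : ℝ)) := if_pos h

-- key per-coefficient identity for the ∂s derivative
lemma coefA (m : ℕ) (lam : ℝ) (hm : 2 ≤ m) (j : ℕ) :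
    cc m lam (j+1) * ((j:ℝ)+1) = -lam * cc (m-2) (lam+1) j := by
  by_cases h : 2*(j+1) ≤ m
  · rw [cc_pos lam h, cc_pos (lam+1) (by omega : 2*j ≤ m - 2)]
    have e1 : m - (j+1) = (m - j - 2) + 1 := by omega
    have e2 : m - 2 - j = m - j - 2 := by omega
    have e3 : m - 2*(j+1) = m - 2 - 2*j := by omega
    rw [e1, e2, e3, poch_succ_left, pow_succ, Nat.factorial_succ]
    have hf1 : ((Nat.factorial j : ℝ)) ≠ 0 := by positivity
    have hf2 : ((Nat.factorial (m - 2 - 2*j) : ℝ)) ≠ 0 := by positivity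
    have hj : ((j:ℝ)+1) ≠ 0 := by positivity
    push_cast
    field_simp
  · rw [cc_zero lam h, cc_zero (lam+1) (by omega : ¬ (2*j ≤ m-2))]
    ring

lemma Fp_extend (m' : ℕ) (lam t s : ℝ) {N : ℕ} (hN : m' + 1 ≤ N) :
    Fp m' lam t s = ∑ k ∈ Finset.range N, cc m' lam k * t^(m'-2*k) * s^k := by
  rw [Fp]
  apply Finset.sum_subset (Finset.range_subset_range.2 hN)
  intro k _ hk
  rw [Finset.mem_range, not_lt] at hk
  rw [cc_zero lam (by omega)]
  ring

lemma Fq_eq (m : ℕ) (lam t s : ℝ) (hm : 2 ≤ m) :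
    Fq m lam t s = -lam * Fp (m-2) (lam+1) t s := by
  rw [Fq, Finset.sum_range_succ', Fp_extend (m-2) (lam+1) t s (by omega : m - 2 + 1 ≤ m),
    Finset.mul_sum]
  simp only [Nat.cast_zero, mul_zero, zero_mul, add_zero, Nat.cast_add, Nat.cast_one]
  apply Finset.sum_congr rfl
  intro j _
  have e3 : m - 2*(j+1) = m - 2 - 2*j := by omega
  have e4 : j + 1 - 1 = j := by omega
  rw [e3, e4]
  have h := coefA m lam hm j
  linear_combination (t^(m - 2 - 2*j) * s^j) * h

lemma Fq_small (m : ℕ) (lam t s : ℝ) (hm : m < 2) : Fq m lam t s = 0 := by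
  interval_cases m <;>
    simp [Fq, Finset.sum_range_succ, cc]

lemma shiftB (m : ℕ) (lam t s : ℝ) (hm : 2 ≤ m) :
    (s - t^2) * Fp (m-2) (lam+1) t s
      = ∑ k ∈ Finset.range (m+1),
          ((if k = 0 then 0 else cc (m-2) (lam+1) (k-1)) - cc (m-2) (lam+1) k)
            * t^(m-2*k) * s^k := by
  have hsplit : ∀ k ∈ Finset.range (m+1),
      ((if k = 0 then 0 else cc (m-2) (lam+1) (k-1)) - cc (m-2) (lam+1) k) * t^(m-2*k) * s^k
      = (if k = 0 then 0 else cc (m-2) (lam+1) (k-1)) * t^(m-2*k) * s^k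
        - cc (m-2) (lam+1) k * t^(m-2*k) * s^k := by
    intro k _; ring
  rw [Finset.sum_congr rfl hsplit, Finset.sum_sub_distrib]
  have h1 : ∑ k ∈ Finset.range (m+1),
      (if k = 0 then 0 else cc (m-2) (lam+1) (k-1)) * t^(m-2*k) * s^k
      = s * Fp (m-2) (lam+1) t s := by
    rw [Finset.sum_range_succ', Fp_extend (m-2) (lam+1) t s (by omega : m-2+1 ≤ m),
      Finset.mul_sum]
    simp only [reduceIte, zero_mul, add_zero, if_neg (Nat.succ_ne_zero _), Nat.add_sub_cancel]
    apply Finset.sum_congr rfl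
    intro j _
    have e : m - 2*(j+1) = m - 2 - 2*j := by omega
    rw [e, pow_succ]
    ring
  have h2 : ∑ k ∈ Finset.range (m+1), cc (m-2) (lam+1) k * t^(m-2*k) * s^k
      = t^2 * Fp (m-2) (lam+1) t s := by
    rw [Fp_extend (m-2) (lam+1) t s (by omega : m-2+1 ≤ m+1), Finset.mul_sum]
    apply Finset.sum_congr rfl
    intro k _
    by_cases h : 2*k ≤ m - 2
    · have e : m - 2*k = (m - 2 - 2*k) + 2 := by omega
      rw [e, pow_add]
      ring
    · rw [cc_zero _ h]
      ring
  rw [h1, h2]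
  ring

set_option maxHeartbeats 1000000 in
lemma coefB (m : ℕ) (lam : ℝ) (hm : 2 ≤ m) (hl : 1 < lam) (k : ℕ) :
    cc m lam k
      = ((m:ℝ)+2*lam-1)*((m:ℝ)+2*lam-2)/((2*lam-1)*(2*lam-2)) * cc m (lam-1) k
        + lam/(lam-1/2) *
          ((if k = 0 then 0 else cc (m-2) (lam+1) (k-1)) - cc (m-2) (lam+1) k) := by
  have hl0 : lam ≠ 0 := by linarith
  have hl1 : (2:ℝ)*lam - 1 ≠ 0 := by linarith
  have hl2 : (2:ℝ)*lam - 2 ≠ 0 := by linarith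
  have hl3 : lam - 1/2 ≠ 0 := by linarith
  have hl4 : lam - 1 ≠ 0 := by linarith
  have hl5 : lam * 2 - 1 ≠ 0 := by linarith
  have hlam1 : lam - 1 + 1 = lam := by ring
  rw [show lam/(lam-1/2) = (2*lam)/(2*lam-1) by
    rw [div_eq_div_iff hl3 hl1]; ring]
  by_cases hk : 2*k ≤ m
  · rcases Nat.eq_zero_or_pos k with rfl | hkpos
    · -- k = 0
      obtain ⟨r, rfl⟩ : ∃ r, m = r + 2 := ⟨m - 2, by omega⟩
      rw [if_pos rfl, cc_pos lam (by omega), cc_pos (lam-1) (by omega),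
        cc_pos (lam+1) (show 2*0 ≤ r + 2 - 2 by omega)]
      simp only [Nat.mul_zero, Nat.sub_zero, Nat.factorial_zero, pow_zero,
        Nat.add_sub_cancel]
      rw [show r+2 = r+1+1 from rfl, poch_succ lam (r+1),
        show poch (lam-1) (r+1+1) = (lam-1) * poch lam (r+1) by
          rw [poch_succ_left, hlam1],
        poch_succ_left lam r,
        Nat.factorial_succ (r+1), Nat.factorial_succ r,
        pow_succ (2:ℝ) (r+1), pow_succ (2:ℝ) r]
      have hfr : ((Nat.factorial r : ℝ)) ≠ 0 := by positivity
      push_cast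
      set Q := poch (lam+1) r with hQ
      set P := (2:ℝ)^r with hP
      set fr := ((Nat.factorial r : ℝ)) with hfr'
      field_simp
      ring
    · obtain ⟨k', rfl⟩ : ∃ k', k = k' + 1 := ⟨k - 1, by omega⟩
      rw [if_neg (Nat.succ_ne_zero k'), Nat.add_sub_cancel]
      by_cases hk2 : 2*(k'+1) ≤ m - 2
      · -- generic case
        obtain ⟨r, rfl⟩ : ∃ r, m = 2*k' + 4 + r := ⟨m - (2*k'+4), by omega⟩
        rw [cc_pos lam (by omega), cc_pos (lam-1) (by omega),
          cc_pos (lam+1) (show 2*k' ≤ 2*k'+4+r - 2 by omega),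
          cc_pos (lam+1) (show 2*(k'+1) ≤ 2*k'+4+r - 2 by omega)]
        rw [show 2*k'+4+r - (k'+1) = ((k'+1+r) + 1) + 1 by omega,
          show 2*k'+4+r - 2*(k'+1) = r + 1 + 1 by omega,
          show 2*k'+4+r - 2 - k' = (k'+1+r) + 1 by omega,
          show 2*k'+4+r - 2 - 2*k' = r + 1 + 1 by omega,
          show 2*k'+4+r - 2 - (k'+1) = k'+1+r by omega,
          show 2*k'+4+r - 2 - 2*(k'+1) = r by omega]
        rw [show poch (lam-1) (k'+1+r+1+1) = (lam-1) * poch lam (k'+1+r+1) by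
              rw [poch_succ_left, hlam1],
          poch_succ_left lam (k'+1+r+1), poch_succ (lam+1) (k'+1+r),
          poch_succ_left lam (k'+1+r),
          Nat.factorial_succ k', Nat.factorial_succ (r+1), Nat.factorial_succ r,
          pow_succ (2:ℝ) (r+1), pow_succ (2:ℝ) r, pow_succ (-1:ℝ) k']
        have hfk : ((Nat.factorial k' : ℝ)) ≠ 0 := by positivity
        have hfr : ((Nat.factorial r : ℝ)) ≠ 0 := by positivity
        push_cast
        set Q := poch (lam+1) (k'+1+r) with hQ
        set E := ((-1:ℝ))^k' with hE
        set P := (2:ℝ)^r with hP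
        set fk := ((Nat.factorial k' : ℝ)) with hfk'
        set fr := ((Nat.factorial r : ℝ)) with hfr'
        field_simp
        ring
      · -- boundary: m = 2k or m = 2k+1
        rw [cc_zero (lam+1) (by omega : ¬ 2*(k'+1) ≤ m - 2)]
        have hcase : m = 2*(k'+1) ∨ m = 2*(k'+1) + 1 := by omega
        rcases hcase with rfl | rfl
        · rw [cc_pos lam (by omega), cc_pos (lam-1) (by omega),
            cc_pos (lam+1) (show 2*k' ≤ 2*(k'+1) - 2 by omega)]
          rw [show 2*(k'+1) - (k'+1) = k' + 1 by omega,
            show 2*(k'+1) - 2*(k'+1) = 0 by omega,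
            show 2*(k'+1) - 2 - k' = k' by omega,
            show 2*(k'+1) - 2 - 2*k' = 0 by omega]
          have h0 : poch (lam+1) k' * lam = poch lam k' * (lam + (k':ℝ)) := by
            rw [mul_comm, ← poch_succ_left, poch_succ]
          have hq : poch (lam+1) k' = poch lam k' * (lam + (k':ℝ)) / lam :=
            (eq_div_iff hl0).2 h0
          rw [poch_succ lam k', pow_succ (-1:ℝ) k', Nat.factorial_succ k',
            show poch (lam-1) (k'+1) = (lam-1) * poch lam k' by
              rw [poch_succ_left, hlam1], hq]
          simp only [Nat.factorial_zero, pow_zero]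
          have hfk : ((Nat.factorial k' : ℝ)) ≠ 0 := by positivity
          push_cast
          set R := poch lam k' with hR
          set E := ((-1:ℝ))^k' with hE
          set fk := ((Nat.factorial k' : ℝ)) with hfk'
          field_simp
          ring
        · rw [cc_pos lam (by omega), cc_pos (lam-1) (by omega),
            cc_pos (lam+1) (show 2*k' ≤ 2*(k'+1)+1 - 2 by omega)]
          rw [show 2*(k'+1)+1 - (k'+1) = (k' + 1) + 1 by omega,
            show 2*(k'+1)+1 - 2*(k'+1) = 1 by omega,
            show 2*(k'+1)+1 - 2 - k' = k' + 1 by omega,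
            show 2*(k'+1)+1 - 2 - 2*k' = 1 by omega]
          rw [show poch (lam-1) (k'+1+1) = (lam-1) * poch lam (k'+1) by
                rw [poch_succ_left, hlam1],
            poch_succ_left lam (k'+1), poch_succ (lam+1) k', poch_succ_left lam k',
            pow_succ (-1:ℝ) k', Nat.factorial_succ k']
          have hfk : ((Nat.factorial k' : ℝ)) ≠ 0 := by positivity
          push_cast
          set Q := poch (lam+1) k' with hQ
          set E := ((-1:ℝ))^k' with hE
          set fk := ((Nat.factorial k' : ℝ)) with hfk'
          field_simp
          ring
  · -- 2k > m : everything vanishes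
    have hk1 : k ≠ 0 := by omega
    rw [cc_zero lam hk, cc_zero (lam-1) hk, if_neg hk1,
      cc_zero (lam+1) (by omega : ¬ 2*(k-1) ≤ m - 2),
      cc_zero (lam+1) (by omega : ¬ 2*k ≤ m - 2)]
    ring

lemma FpB (m : ℕ) (lam t s : ℝ) (hm : 2 ≤ m) (hl : 1 < lam) :
    Fp m lam t s
      = ((m:ℝ)+2*lam-1)*((m:ℝ)+2*lam-2)/((2*lam-1)*(2*lam-2)) * Fp m (lam-1) t s
        + lam/(lam-1/2) * ((s - t^2) * Fp (m-2) (lam+1) t s) := by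
  rw [shiftB m lam t s hm, Fp, Fp, Finset.mul_sum, Finset.mul_sum,
    ← Finset.sum_add_distrib]
  apply Finset.sum_congr rfl
  intro k _
  have h := coefB m lam hm hl k
  linear_combination (t^(m-2*k) * s^k) * h

lemma FpB_small (m : ℕ) (lam t s : ℝ) (hm : m < 2) (hl : 1 < lam) :
    Fp m lam t s
      = ((m:ℝ)+2*lam-1)*((m:ℝ)+2*lam-2)/((2*lam-1)*(2*lam-2)) * Fp m (lam-1) t s := by
  have hl1 : (2:ℝ)*lam - 1 ≠ 0 := by linarith
  have hl2 : (2:ℝ)*lam - 2 ≠ 0 := by linarith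
  have hl4 : lam - 1 ≠ 0 := by linarith
  have hl5 : lam * 2 - 1 ≠ 0 := by linarith
  interval_cases m
  · rw [Fp, Fp, Finset.sum_range_one, Finset.sum_range_one,
      cc_pos lam (by omega : 2*0 ≤ 0), cc_pos (lam-1) (by omega : 2*0 ≤ 0)]
    simp only [poch_zero, Nat.sub_zero, Nat.mul_zero, Nat.factorial_zero, pow_zero,
      Nat.cast_zero, Nat.cast_one]
    field_simp
    ring
  · simp only [Fp, Finset.sum_range_succ, Finset.sum_range_zero,
      cc_pos _ (by omega : 2*0 ≤ 1), cc_zero _ (by omega : ¬ 2*1 ≤ 1)]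
    simp only [Nat.sub_zero, Nat.mul_zero, Nat.factorial_zero, pow_zero,
      Nat.factorial_one, zero_mul, add_zero, zero_add]
    rw [show poch lam 1 = lam by simp [poch], show poch (lam-1) 1 = lam-1 by simp [poch]]
    push_cast
    field_simp
    ring



lemma norm_sq_eq {n : ℕ} (x : EuclideanSpace ℝ (Fin n)) : ‖x‖^2 = ∑ j, (x j)^2 := by
  rw [EuclideanSpace.norm_eq, Real.sq_sqrt (by positivity)]
  simp [Real.norm_eq_abs, sq_abs]

lemma Fp_half (m : ℕ) (lam t s : ℝ) :
    Fp m lam t s = ∑ k ∈ Finset.range (m/2+1), cc m lam k * t^(m-2*k) * s^k := by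
  rw [Fp]
  symm
  apply Finset.sum_subset (Finset.range_subset_range.2 (by omega))
  intro k _ hk
  rw [Finset.mem_range, not_lt] at hk
  rw [cc_zero lam (by omega)]
  ring

lemma FgZ_eq (d m : ℕ) (lam : ℝ) (x : EuclideanSpace ℝ (Fin (d+1))) :
    FgZ d (m:ℤ) lam x = Fp m lam (x (Fin.last d)) (‖x‖^2) := by
  rw [FgZ, if_pos (by positivity : (0:ℤ) ≤ (m:ℤ)), Int.toNat_natCast]
  by_cases hx : ‖x‖ = 0
  · have hx0 : x (Fin.last d) = 0 := by
      have h : x = 0 := norm_eq_zero.mp hx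
      rw [h]; rfl
    rw [hx, hx0]
    rcases Nat.eq_zero_or_pos m with rfl | hm
    · rw [Fp, Finset.sum_range_one, cc_pos lam (by omega : 2*0 ≤ 0)]
      simp [gegenbauer, poch_zero]
    · rw [zero_pow (by omega : m ≠ 0), zero_mul, Fp]
      symm
      apply Finset.sum_eq_zero
      intro k _
      rcases Nat.eq_zero_or_pos k with rfl | hk
      · rw [Nat.mul_zero, Nat.sub_zero, zero_pow (by omega : m ≠ 0)]
        ring
      · rw [zero_pow (by omega : 2 ≠ 0), zero_pow (by omega : k ≠ 0)]
        ring
  · rw [Fp_half, gegenbauer, Finset.mul_sum]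
    apply Finset.sum_congr rfl
    intro k hk
    rw [Finset.mem_range] at hk
    have h2k : 2*k ≤ m := by omega
    rw [cc_pos lam h2k]
    have h1 : (2*(x (Fin.last d)/‖x‖))^(m-2*k)
        = 2^(m-2*k) * (x (Fin.last d))^(m-2*k) / ‖x‖^(m-2*k) := by
      rw [mul_pow, div_pow]; ring
    have h2 : ‖x‖^m = ‖x‖^(m-2*k) * (‖x‖^2)^k := by
      rw [← pow_mul, ← pow_add]; congr 1; omega
    rw [h1, h2]
    have h3 : ‖x‖^(m-2*k) ≠ 0 := pow_ne_zero _ hx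
    field_simp

lemma FgZ_sub2 (d m : ℕ) (hm : 2 ≤ m) (lam : ℝ) (x : EuclideanSpace ℝ (Fin (d+1))) :
    FgZ d ((m:ℤ)-2) lam x = Fp (m-2) lam (x (Fin.last d)) (‖x‖^2) := by
  rw [show (m:ℤ)-2 = ((m-2 : ℕ) : ℤ) by omega]
  exact FgZ_eq d (m-2) lam x

lemma FgZ_sub2_small (d m : ℕ) (hm : m < 2) (lam : ℝ) (x : EuclideanSpace ℝ (Fin (d+1))) :
    FgZ d ((m:ℤ)-2) lam x = 0 := if_neg (by omega)



noncomputable def Rlin (d : ℕ) : EuclideanSpace ℝ (Fin (d+1)) →L[ℝ] EuclideanSpace ℝ (Fin d) :=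
  (EuclideanSpace.equiv (Fin d) ℝ).symm.toContinuousLinearMap.comp
    (ContinuousLinearMap.pi fun i => EuclideanSpace.proj i.castSucc)

lemma Rlin_apply (d : ℕ) (z : EuclideanSpace ℝ (Fin (d+1))) (j : Fin d) :
    Rlin d z j = z j.castSucc := by
  simp [Rlin, EuclideanSpace.equiv]

lemma restr_eq (d : ℕ) : restr d = ⇑(Rlin d) := by
  funext z
  ext j
  rw [Rlin_apply]
  rfl

lemma Rlin_single (d : ℕ) (i : Fin d) :
    Rlin d (EuclideanSpace.single i.castSucc (1:ℝ)) = EuclideanSpace.single i (1:ℝ) := by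
  ext j
  rw [Rlin_apply, EuclideanSpace.single_apply, EuclideanSpace.single_apply]
  simp [Fin.castSucc_inj]

lemma hasFDerivAt_coord {d : ℕ} (j : Fin d) (x : EuclideanSpace ℝ (Fin d)) :
    HasFDerivAt (fun z : EuclideanSpace ℝ (Fin d) => z j)
      (EuclideanSpace.proj j : EuclideanSpace ℝ (Fin d) →L[ℝ] ℝ) x := by
  have h : HasFDerivAt (⇑(EuclideanSpace.proj (𝕜 := ℝ) (ι := Fin d) j))
      (EuclideanSpace.proj j : EuclideanSpace ℝ (Fin d) →L[ℝ] ℝ) x :=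
    ContinuousLinearMap.hasFDerivAt _
  have e : ⇑(EuclideanSpace.proj (𝕜 := ℝ) (ι := Fin d) j)
      = fun z : EuclideanSpace ℝ (Fin d) => z j := by
    funext z
    simp [PiLp.proj_apply]
  rwa [e] at h

lemma hasFDerivAt_pow'' {E : Type*} [NormedAddCommGroup E] [NormedSpace ℝ E]
    {f : E → ℝ} {f' : E →L[ℝ] ℝ} {x : E} (h : HasFDerivAt f f' x) (n : ℕ) :
    HasFDerivAt (fun y => f y ^ n) (((n : ℝ) * f x ^ (n - 1)) • f') x := by
  induction n with
  | zero => simpa using hasFDerivAt_const (1:ℝ) x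
  | succ n ih =>
    have : HasFDerivAt (fun y => f y ^ n * f y) _ x := ih.mul h
    convert this using 1
    · rfl
    · funext y; exact pow_succ _ _
    ext v
    simp only [ContinuousLinearMap.smul_apply, ContinuousLinearMap.add_apply,
      ContinuousLinearMap.coe_smul', Pi.smul_apply, smul_eq_mul]
    rcases Nat.eq_zero_or_pos n with hn | hn
    · subst hn; simp
    · have h1 : n + 1 - 1 = n := by omega
      have h3 : f x * f x ^ (n - 1) = f x ^ n := by
        rw [← pow_succ']; congr 1; omega
      rw [h1, show f x * (↑n * f x ^ (n - 1) * f' v) = (n:ℝ) * (f x * f x ^ (n-1)) * f' v by ring, h3]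
      push_cast
      ring

lemma norm_sq_hasFDeriv {n : ℕ} (x : EuclideanSpace ℝ (Fin n)) :
    HasFDerivAt (fun z : EuclideanSpace ℝ (Fin n) => ‖z‖^2)
      (∑ j, (((2:ℕ):ℝ) * x j ^ (2-1)) • (EuclideanSpace.proj j : EuclideanSpace ℝ (Fin n) →L[ℝ] ℝ)) x := by
  have hfun : (fun z : EuclideanSpace ℝ (Fin n) => ‖z‖^2)
      = fun z => ∑ j, (z j)^2 := by
    funext z; exact norm_sq_eq z
  rw [hfun]
  exact HasFDerivAt.fun_sum fun j _ => hasFDerivAt_pow'' (hasFDerivAt_coord j x) 2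

set_option maxHeartbeats 1000000 in
lemma main_deriv (d m : ℕ) (lam : ℝ) (Y' : EuclideanSpace ℝ (Fin d) → ℝ)
    (hY : Differentiable ℝ Y') (x : EuclideanSpace ℝ (Fin (d+1))) (i : Fin d) :
    pd i.castSucc (fun z => Y' (restr d z) * Fp m lam (z (Fin.last d)) (‖z‖^2)) x
      = pd i Y' (restr d x) * Fp m lam (x (Fin.last d)) (‖x‖^2)
        + Y' (restr d x) * (2 * x i.castSucc) * Fq m lam (x (Fin.last d)) (‖x‖^2) := by
  set t0 := x (Fin.last d)
  set s0 := ‖x‖^2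
  set SD := ∑ j, (((2:ℕ):ℝ) * x j ^ (2-1)) • (EuclideanSpace.proj j : EuclideanSpace ℝ (Fin (d+1)) →L[ℝ] ℝ) with hSD
  set PL := (EuclideanSpace.proj (Fin.last d) : EuclideanSpace ℝ (Fin (d+1)) →L[ℝ] ℝ) with hPL
  set A' : ℕ → (EuclideanSpace ℝ (Fin (d+1)) →L[ℝ] ℝ) := fun k =>
    cc m lam k • (t0^(m-2*k) • (((k:ℝ) * s0^(k-1)) • SD)
      + s0^k • ((((m-2*k : ℕ):ℝ) * t0^(m-2*k-1)) • PL)) with hA'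
  have hterm : ∀ k ∈ Finset.range (m+1),
      HasFDerivAt (fun z : EuclideanSpace ℝ (Fin (d+1)) =>
        cc m lam k * ((z (Fin.last d))^(m-2*k) * (‖z‖^2)^k)) (A' k) x := by
    intro k _
    have h1 : HasFDerivAt (fun z : EuclideanSpace ℝ (Fin (d+1)) => (z (Fin.last d))^(m-2*k))
        ((((m-2*k : ℕ):ℝ) * t0^(m-2*k-1)) • PL) x :=
      hasFDerivAt_pow'' (hasFDerivAt_coord (Fin.last d) x) (m-2*k)
    have h2 : HasFDerivAt (fun z : EuclideanSpace ℝ (Fin (d+1)) => (‖z‖^2)^k)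
        (((k:ℝ) * s0^(k-1)) • SD) x := by
      have := hasFDerivAt_pow'' (norm_sq_hasFDeriv x) k
      exact this
    exact (h1.mul h2).const_mul (cc m lam k)
  have hF : HasFDerivAt (fun z : EuclideanSpace ℝ (Fin (d+1)) =>
      Fp m lam (z (Fin.last d)) (‖z‖^2)) (∑ k ∈ Finset.range (m+1), A' k) x := by
    have hfun : (fun z : EuclideanSpace ℝ (Fin (d+1)) => Fp m lam (z (Fin.last d)) (‖z‖^2))
        = fun z => ∑ k ∈ Finset.range (m+1),
            cc m lam k * ((z (Fin.last d))^(m-2*k) * (‖z‖^2)^k) := by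
      funext z
      rw [Fp]
      exact Finset.sum_congr rfl fun k _ => by ring
    rw [hfun]
    exact HasFDerivAt.fun_sum hterm
  have hYr : HasFDerivAt (fun z => Y' (restr d z))
      ((fderiv ℝ Y' (restr d x)).comp (Rlin d)) x := by
    have h1 : HasFDerivAt Y' (fderiv ℝ Y' (restr d x)) (restr d x) :=
      (hY (restr d x)).hasFDerivAt
    have h2 : HasFDerivAt (restr d) (Rlin d) x := by
      rw [restr_eq]; exact (Rlin d).hasFDerivAt
    exact h1.comp x h2
  have hmain : HasFDerivAt (fun z => Y' (restr d z) * Fp m lam (z (Fin.last d)) (‖z‖^2)) _ x :=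
    hYr.mul hF
  rw [pd, hmain.fderiv]
  have hv1 : (Rlin d) (EuclideanSpace.single i.castSucc (1:ℝ))
      = EuclideanSpace.single i (1:ℝ) := Rlin_single d i
  have hv2 : PL (EuclideanSpace.single i.castSucc (1:ℝ)) = 0 := by
    rw [hPL]
    simp only [PiLp.proj_apply, EuclideanSpace.single_apply]
    rw [if_neg (Fin.castSucc_lt_last i).ne']
  have hv3 : SD (EuclideanSpace.single i.castSucc (1:ℝ)) = 2 * x i.castSucc := by
    rw [hSD]
    simp only [ContinuousLinearMap.coe_sum', Finset.sum_apply,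
      ContinuousLinearMap.coe_smul', Pi.smul_apply, PiLp.proj_apply,
      EuclideanSpace.single_apply, smul_eq_mul, mul_ite, mul_one, mul_zero]
    rw [Finset.sum_ite_eq' Finset.univ i.castSucc
      (fun j => ((2:ℕ):ℝ) * x j ^ (2-1))]
    simp
  have hpd : (fderiv ℝ Y' (restr d x)) (EuclideanSpace.single i (1:ℝ))
      = pd i Y' (restr d x) := rfl
  have hsum : (∑ k ∈ Finset.range (m+1), A' k) (EuclideanSpace.single i.castSucc (1:ℝ))
      = (2 * x i.castSucc) * Fq m lam t0 s0 := by
    rw [ContinuousLinearMap.sum_apply, Fq, Finset.mul_sum]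
    apply Finset.sum_congr rfl
    intro k _
    simp only [hA', ContinuousLinearMap.add_apply, ContinuousLinearMap.coe_smul',
      Pi.smul_apply, smul_eq_mul, hv2, hv3, mul_zero, add_zero]
    ring
  simp only [ContinuousLinearMap.add_apply, ContinuousLinearMap.coe_smul',
    Pi.smul_apply, ContinuousLinearMap.comp_apply, smul_eq_mul, hv1, hsum, hpd]
  ring

/-- For `1 ≤ i ≤ d-1` (here: `i.castSucc` in `ℝ^{d+1}`), with `λ = n' + ((d+1)-2)/2 > 1`:
`∂ᵢ(Y'(x') F_m^λ(x)) = -2λ proj(xᵢY')(x') F_{m-2}^{λ+1}(x)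
  + ((m+2λ-1)(m+2λ-2)/((2λ-1)(2λ-2))) ∂ᵢY'(x') F_m^{λ-1}(x)`,
where `proj(xᵢY')(x') = xᵢ Y'(x') - (‖x'‖²/(2(n'+(d-2)/2))) ∂ᵢY'(x')`. -/
theorem stmt17 (d : ℕ) (hd : 2 ≤ d) (n' m : ℕ)
    (Y' : EuclideanSpace ℝ (Fin d) → ℝ) (hs : ContDiff ℝ (⊤ : ℕ∞) Y')
    (hhom : ∀ (c : ℝ) (x' : EuclideanSpace ℝ (Fin d)), Y' (c • x') = c ^ n' * Y' x')
    (hharm : ∀ x', lap Y' x' = 0)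
    (hlam : 1 < (n' : ℝ) + ((d : ℝ) - 1) / 2)
    (i : Fin d) (x : EuclideanSpace ℝ (Fin (d + 1))) :
    pd i.castSucc (fun z : EuclideanSpace ℝ (Fin (d + 1)) =>
        Y' (restr d z) * FgZ d (m : ℤ) ((n' : ℝ) + ((d : ℝ) - 1) / 2) z) x
      = -2 * ((n' : ℝ) + ((d : ℝ) - 1) / 2) *
          (x i.castSucc * Y' (restr d x) -
            ‖restr d x‖ ^ 2 / (2 * ((n' : ℝ) + ((d : ℝ) - 2) / 2)) * pd i Y' (restr d x)) *
          FgZ d ((m : ℤ) - 2) ((n' : ℝ) + ((d : ℝ) - 1) / 2 + 1) x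
        + ((m : ℝ) + 2 * ((n' : ℝ) + ((d : ℝ) - 1) / 2) - 1) *
            ((m : ℝ) + 2 * ((n' : ℝ) + ((d : ℝ) - 1) / 2) - 2) /
            ((2 * ((n' : ℝ) + ((d : ℝ) - 1) / 2) - 1) *
              (2 * ((n' : ℝ) + ((d : ℝ) - 1) / 2) - 2)) *
            pd i Y' (restr d x) * FgZ d (m : ℤ) ((n' : ℝ) + ((d : ℝ) - 1) / 2 - 1) x := by
  have hY : Differentiable ℝ Y' := hs.differentiable (by simp)
  set lam : ℝ := (n' : ℝ) + ((d : ℝ) - 1) / 2 with hlamdef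
  have hl : 1 < lam := hlam
  have hfun : (fun z : EuclideanSpace ℝ (Fin (d + 1)) =>
      Y' (restr d z) * FgZ d (m : ℤ) lam z)
      = fun z => Y' (restr d z) * Fp m lam (z (Fin.last d)) (‖z‖^2) := by
    funext z
    rw [FgZ_eq]
  rw [hfun, main_deriv d m lam Y' hY x i, FgZ_eq d m (lam-1) x]
  have hs' : ‖restr d x‖^2 = ‖x‖^2 - (x (Fin.last d))^2 := by
    have h1 : ‖restr d x‖^2 = ∑ j : Fin d, (x j.castSucc)^2 := by
      rw [norm_sq_eq]
      rfl
    rw [h1, norm_sq_eq x, Fin.sum_univ_castSucc]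
    ring
  have hmu : 2 * ((n' : ℝ) + ((d:ℝ) - 2)/2) = 2*lam - 1 := by
    rw [hlamdef]; ring
  rw [hs', hmu]
  have h1 : (2:ℝ)*lam - 1 ≠ 0 := by linarith
  have h2 : (2:ℝ)*lam - 2 ≠ 0 := by linarith
  have h3 : lam - 1/2 ≠ 0 := by
    intro hc
    rw [sub_eq_zero] at hc
    rw [hc] at hl
    norm_num at hl
  have hdiv : lam/(lam-1/2) = 2*lam/(2*lam-1) := by
    rw [div_eq_div_iff h3 h1]; ring
  by_cases hm2 : 2 ≤ m
  · rw [Fq_eq m lam _ _ hm2, FpB m lam _ _ hm2 hl, FgZ_sub2 d m hm2 (lam+1) x, hdiv]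
    set P2 := Fp (m-2) (lam+1) (x (Fin.last d)) (‖x‖^2)
    set P1 := Fp m (lam-1) (x (Fin.last d)) (‖x‖^2)
    set Acoef := ((m:ℝ)+2*lam-1)*((m:ℝ)+2*lam-2)/((2*lam-1)*(2*lam-2)) with hA
    set py := pd i Y' (restr d x)
    set y0 := Y' (restr d x)
    set xi := x i.castSucc
    set tt := x (Fin.last d)
    set ss := ‖x‖^2
    field_simp
    ring
  · rw [Fq_small m lam _ _ (by omega), FpB_small m lam _ _ (by omega) hl,
      FgZ_sub2_small d m (by omega) (lam+1) x]
    set P1 := Fp m (lam-1) (x (Fin.last d)) (‖x‖^2)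
    set Acoef := ((m:ℝ)+2*lam-1)*((m:ℝ)+2*lam-2)/((2*lam-1)*(2*lam-2)) with hA
    ring
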